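/- Let Γ be a relevant collection that is not hke and is of minimal cardinality among non-KE subcollections (so Γ−{S} is hke for every S ∈ Γ, but Γ is not KE). Then for every partition {Γ₁,Γ₂} of Γ into two non-empty subcollections, |⋂Γ₁ − ⋃Γ₂| ≠ |⋂Γ₂ − ⋃Γ₁|. -/

import Mathlib

open Finset

/-- Union of a finite collection of finite sets. -/
def collU {α : Type*} [DecidableEq α] (Γ : Finset (Finset α)) : Finset α :=
  Γ.sup id

/-- Intersection of a finite collection of finite sets
(equals the usual intersection when the collection is non-empty). -/
def collI {α : Type*} [DecidableEq α] (Γ : Finset (Finset α)) : Finset α :=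
  (Γ.sup id).filter (fun x => ∀ S ∈ Γ, x ∈ S)

/-- `e Γ = |⋃Γ| + |⋂Γ|` as an integer. -/
def collE {α : Type*} [DecidableEq α] (Γ : Finset (Finset α)) : ℤ :=
  (collU Γ).card + (collI Γ).card

/-- `F` is a hereditary König–Egerváry collection with common cardinality `a`. -/
def IsHKE {α : Type*} [DecidableEq α] (F : Finset (Finset α)) (a : ℕ) : Prop :=
  (∀ S ∈ F, S.card = a) ∧
  ∀ Γ ⊆ F, Γ.Nonempty → collE Γ = 2 * (a : ℤ)

/-!
Write `D(Γ₁, Γ₂) = |⋂Γ₂ − ⋃Γ₁| − |⋂Γ₁ − ⋃Γ₂|` for a partition of `Γ` into non-empty parts.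
Moving one set `T` from `Γ₂` to `Γ₁` gives the recursion
`D(Γ₁, {T} ∪ Γ₂) = D(Γ₁, Γ₂) − D({T} ∪ Γ₁, Γ₂)`, and `D(Γ₁, {T}) = e({T} ∪ Γ₁) − e(Γ₁)`.
If every non-empty proper subcollection of `Γ` has the same value `c` of `e`, induction on
`|Γ₂|` gives `D(Γ₁, Γ₂) = (−1)^(|Γ₂|+1) (e(Γ) − c)`: the first term of the recursion is the defect of a
partition of a proper subcollection, all of whose subcollections have `e = c`, so it vanishes.
For a minimal non-KE collection `e(Γ) ≠ 2a = c`, so no partition has zero defect.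
-/

section

variable {α : Type*} [DecidableEq α]

def collD (Γ₁ Γ₂ : Finset (Finset α)) : ℤ :=
  ((collI Γ₂ \ collU Γ₁).card : ℤ) - ((collI Γ₁ \ collU Γ₂).card : ℤ)

lemma collU_insert (T : Finset α) (Γ : Finset (Finset α)) :
    collU (insert T Γ) = T ∪ collU Γ := by
  simp [collU]

lemma collU_singleton (T : Finset α) : collU ({T} : Finset (Finset α)) = T := by
  simp [collU]

lemma mem_collI {Γ : Finset (Finset α)} (h : Γ.Nonempty) {x : α} :
    x ∈ collI Γ ↔ ∀ S ∈ Γ, x ∈ S := by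
  refine ⟨fun hx => (mem_filter.1 hx).2, fun hx => mem_filter.2 ⟨?_, hx⟩⟩
  obtain ⟨S, hS⟩ := h
  exact le_sup (f := id) hS (hx S hS)

lemma collI_insert {Γ : Finset (Finset α)} (h : Γ.Nonempty) (T : Finset α) :
    collI (insert T Γ) = T ∩ collI Γ := by
  ext x
  simp [mem_collI (insert_nonempty T Γ), mem_collI h]

lemma collI_singleton (T : Finset α) : collI ({T} : Finset (Finset α)) = T := by
  ext x
  simp [mem_collI (singleton_nonempty T)]

lemma card_inter_sdiff_add_card_sdiff_union (T B U : Finset α) :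
    #((T ∩ B) \ U) + #(B \ (T ∪ U)) = #(B \ U) := by
  have h₁ : (T ∩ B) \ U = (B \ U) ∩ T := by ext; simp only [mem_sdiff, mem_inter]; tauto
  have h₂ : B \ (T ∪ U) = (B \ U) \ T := by ext; simp only [mem_sdiff, mem_union]; tauto
  rw [h₁, h₂, card_inter_add_card_sdiff]

lemma collD_singleton_right {Γ₁ : Finset (Finset α)} (h₁ : Γ₁.Nonempty) (T : Finset α) :
    collD Γ₁ {T} = collE (insert T Γ₁) - collE Γ₁ := by
  have hU := card_sdiff_add_card T (collU Γ₁)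
  have hI := card_inter_add_card_sdiff (collI Γ₁) T
  rw [inter_comm] at hI
  simp only [collD, collE, collU_insert, collI_insert h₁, collI_singleton, collU_singleton]
  omega

lemma collD_insert_right {Γ₁ Γ₂ : Finset (Finset α)} (h₁ : Γ₁.Nonempty) (h₂ : Γ₂.Nonempty)
    (T : Finset α) :
    collD Γ₁ (insert T Γ₂) = collD Γ₁ Γ₂ - collD (insert T Γ₁) Γ₂ := by
  have c₁ := card_inter_sdiff_add_card_sdiff_union T (collI Γ₂) (collU Γ₁)
  have c₂ := card_inter_sdiff_add_card_sdiff_union T (collI Γ₁) (collU Γ₂)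
  simp only [collD, collU_insert, collI_insert h₁, collI_insert h₂]
  omega

theorem collD_eq_of_forall_ssubset_collE_eq {Γ₁ Γ₂ : Finset (Finset α)} {c : ℤ}
    (hc : ∀ Δ ⊂ Γ₁ ∪ Γ₂, Δ.Nonempty → collE Δ = c) (hdisj : Disjoint Γ₁ Γ₂)
    (h₁ : Γ₁.Nonempty) (h₂ : Γ₂.Nonempty) :
    collD Γ₁ Γ₂ = (-1) ^ (#Γ₂ + 1) * (collE (Γ₁ ∪ Γ₂) - c) := by
  induction h₂ using Nonempty.cons_induction generalizing Γ₁ with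
  | singleton T =>
    have hT : T ∉ Γ₁ := disjoint_singleton_right.1 hdisj
    have hΓ₁ : Γ₁ ⊂ Γ₁ ∪ {T} := by
      rw [union_singleton]
      exact ssubset_insert hT
    rw [collD_singleton_right h₁, hc Γ₁ hΓ₁ h₁, ← union_singleton]
    simp
  | cons T Γ₂ hTΓ₂ h₂ ih =>
    rw [cons_eq_insert] at hc hdisj ⊢
    have hT : T ∉ Γ₁ := fun h => disjoint_left.1 hdisj h (mem_insert_self T Γ₂)
    have hdisj₂ : Disjoint Γ₁ Γ₂ := hdisj.mono_right (subset_insert T Γ₂)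
    have hssub : Γ₁ ∪ Γ₂ ⊂ Γ₁ ∪ insert T Γ₂ := by
      rw [union_insert]
      exact ssubset_insert (by simp [hT, hTΓ₂])
    have hkeep : collD Γ₁ Γ₂ = 0 := by
      rw [ih (fun Δ hΔ => hc Δ (hΔ.trans hssub)) hdisj₂ h₁,
        hc _ hssub (h₁.mono subset_union_left), sub_self, mul_zero]
    have hmove := ih (Γ₁ := insert T Γ₁) (by rwa [insert_union, ← union_insert])
      (disjoint_insert_left.2 ⟨hTΓ₂, hdisj₂⟩) (insert_nonempty T Γ₁)
    rw [insert_union, ← union_insert] at hmove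
    rw [collD_insert_right h₁ h₂, hkeep, hmove, card_insert_of_notMem hTΓ₂]
    ring

end

theorem stmt_13_general {α : Type*} [DecidableEq α] (Γ : Finset (Finset α))
    (a : ℕ)
    (hhke : ∀ S ∈ Γ, IsHKE (Γ.erase S) a)
    (hnKE : collE Γ ≠ 2 * (a : ℤ)) :
    ∀ Γ₁ Γ₂ : Finset (Finset α),
      Γ₁ ∪ Γ₂ = Γ → Disjoint Γ₁ Γ₂ → Γ₁.Nonempty → Γ₂.Nonempty →
      (collI Γ₁ \ collU Γ₂).card ≠ (collI Γ₂ \ collU Γ₁).card := by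
  rintro Γ₁ Γ₂ rfl hdisj h₁ h₂ hcard
  have hproper : ∀ Δ ⊂ Γ₁ ∪ Γ₂, Δ.Nonempty → collE Δ = 2 * (a : ℤ) := by
    intro Δ hΔ hne
    obtain ⟨S, hS, hSΔ⟩ := exists_of_ssubset hΔ
    exact (hhke S hS).2 Δ (subset_erase.2 ⟨hΔ.subset, hSΔ⟩) hne
  have hD := collD_eq_of_forall_ssubset_collE_eq hproper hdisj h₁ h₂
  rw [collD, hcard, sub_self, eq_comm, mul_eq_zero, sub_eq_zero] at hD
  exact hD.elim (pow_ne_zero _ (by norm_num)) hnKE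

theorem stmt_13 {α : Type*} [DecidableEq α] (Γ : Finset (Finset α))
    (hcard : 2 ≤ Γ.card) (a : ℕ) (ha : 0 < a)
    (hsize : ∀ S ∈ Γ, S.card = a)
    (hhke : ∀ S ∈ Γ, IsHKE (Γ.erase S) a)
    (hnKE : collE Γ ≠ 2 * (a : ℤ)) :
    ∀ Γ₁ Γ₂ : Finset (Finset α),
      Γ₁ ∪ Γ₂ = Γ → Disjoint Γ₁ Γ₂ → Γ₁.Nonempty → Γ₂.Nonempty →
      (collI Γ₁ \ collU Γ₂).card ≠ (collI Γ₂ \ collU Γ₁).card :=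
  stmt_13_general Γ a hhke hnKE
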